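/- arXiv:1402.5197 — 4 statements merged into one kernel-verified Lean document; each statement's English description precedes it below -/
import Mathlib

section
/- (Maximum principle) Let $\lambda>0$, let $b:\mathbb{R}^d\to\mathbb{R}^d$ be a bounded measurable function, and let $u\in C_b^2(\mathbb{R}^d)$ satisfy $u(x)\to0$ as $|x|\to\infty$. If $Lu(x)+b(x)\cdot\nabla u(x)-\lambda u(x)=0$ for all $x\in\mathbb{R}^d$, then $u\equiv0$. The same conclusion holds with $\tilde{L}$ in place of $L$. -/
open MeasureTheory Metric Filter Real
open scoped ENNReal Topology RealInnerProductSpace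

noncomputable section

/-- Euclidean space `ℝ^d`. -/
abbrev Ed (d : ℕ) := EuclideanSpace ℝ (Fin d)

/-- Generic nonlocal operator with kernel `K` and compensator weight `c`:
`x ↦ ∫ (u(x+y) - u(x) - y·∇u(x) c(y)) K(y) dy`. -/
def nonlocalOp (d : ℕ) (K c : Ed d → ℝ) (u : Ed d → ℝ) (x : Ed d) : ℝ :=
  ∫ y, (u (x + y) - u x - fderiv ℝ u x y * c y) * K y

/-- `σ := inf {δ > 0 : ∫_{|y| ≤ 1} |y|^δ J(y) dy < ∞}`. -/
def sigmaJ (d : ℕ) (J : Ed d → ℝ) : ℝ :=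
  sInf {δ : ℝ | 0 < δ ∧
    IntegrableOn (fun y => ‖y‖ ^ δ * J y) {y : Ed d | ‖y‖ ≤ 1} volume}

/-- The compensator cutoff `χ`: `0` if `σ < 1`, `1_{|y|<1}` if `σ = 1`, `1` if `σ > 1`. -/
def chiJ (d : ℕ) (J : Ed d → ℝ) (y : Ed d) : ℝ :=
  if sigmaJ d J < 1 then 0
  else if sigmaJ d J = 1 then (if ‖y‖ < 1 then 1 else 0)
  else 1

/-- The operator `𝒜`. -/
def opA (d : ℕ) (J : Ed d → ℝ) (u : Ed d → ℝ) : Ed d → ℝ :=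
  nonlocalOp d J (chiJ d J) u

/-- The operator `L`. -/
def opL (d : ℕ) (a J : Ed d → ℝ) (u : Ed d → ℝ) : Ed d → ℝ :=
  nonlocalOp d (fun y => a y * J y) (chiJ d J) u

/-- The operator `L̃` (compensator cutoff `1_{|y|<1}`). -/
def opLt (d : ℕ) (a J : Ed d → ℝ) (u : Ed d → ℝ) : Ed d → ℝ :=
  nonlocalOp d (fun y => a y * J y) (fun y => if ‖y‖ < 1 then 1 else 0) u

/-- `C_0^∞` functions. -/
def IsTestFun {d : ℕ} (f : Ed d → ℝ) : Prop := ContDiff ℝ (⊤ : ℕ∞) f ∧ HasCompactSupport f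

/-- At a global maximum the nonlocal operator is nonpositive. -/
lemma nonlocalOp_nonpos_at_max {d : ℕ} (K c : Ed d → ℝ) (hK : ∀ y, 0 ≤ K y)
    (u : Ed d → ℝ) (hu : Differentiable ℝ u) (x₀ : Ed d) (hmax : ∀ x, u x ≤ u x₀) :
    nonlocalOp d K c u x₀ ≤ 0 := by
  have hD : fderiv ℝ u x₀ = 0 := by
    have : IsLocalMax u x₀ := (isMaxOn_univ_iff.2 hmax).isLocalMax (by simp)
    exact this.fderiv_eq_zero
  have h : ∀ y, (u (x₀ + y) - u x₀ - fderiv ℝ u x₀ y * c y) * K y ≤ 0 := by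
    intro y
    have h1 : u (x₀ + y) - u x₀ - fderiv ℝ u x₀ y * c y ≤ 0 := by
      rw [hD]; simp [sub_nonpos, hmax (x₀ + y)]
    exact mul_nonpos_of_nonpos_of_nonneg h1 (hK y)
  exact integral_nonpos h

/-- At a global minimum the nonlocal operator is nonnegative. -/
lemma nonlocalOp_nonneg_at_min {d : ℕ} (K c : Ed d → ℝ) (hK : ∀ y, 0 ≤ K y)
    (u : Ed d → ℝ) (hu : Differentiable ℝ u) (x₀ : Ed d) (hmin : ∀ x, u x₀ ≤ u x) :
    0 ≤ nonlocalOp d K c u x₀ := by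
  have hD : fderiv ℝ u x₀ = 0 := by
    have : IsLocalMin u x₀ := (isMinOn_univ_iff.2 hmin).isLocalMin (by simp)
    exact this.fderiv_eq_zero
  have h : ∀ y, 0 ≤ (u (x₀ + y) - u x₀ - fderiv ℝ u x₀ y * c y) * K y := by
    intro y
    have h1 : 0 ≤ u (x₀ + y) - u x₀ - fderiv ℝ u x₀ y * c y := by
      rw [hD]; simp [sub_nonneg, hmin (x₀ + y)]
    exact mul_nonneg h1 (hK y)
  exact integral_nonneg h

theorem statement1 (d : ℕ) (hd : 1 ≤ d) (J : Ed d → ℝ) (j : ℝ → ℝ) (a : Ed d → ℝ)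
    (ν Λ : ℝ) (hν : 0 < ν)
    (hJm : Measurable J) (hJ0 : ∀ y, 0 ≤ J y) (hJj : ∀ y, J y = j ‖y‖)
    (hLevy : Integrable (fun y : Ed d => min 1 (‖y‖ ^ 2) * J y))
    (ham : Measurable a) (ha : ∀ y, ν ≤ a y ∧ a y ≤ Λ)
    (lam : ℝ) (hlam : 0 < lam)
    (b : Ed d → Ed d) (hbm : Measurable b) (hbb : ∃ M, ∀ x, ‖b x‖ ≤ M)
    (u : Ed d → ℝ) (hu : ContDiff ℝ 2 u)
    (hub : ∀ i : ℕ, i ≤ 2 → ∃ M, ∀ x, ‖iteratedFDeriv ℝ i u x‖ ≤ M)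
    (hu0 : Tendsto u (cocompact (Ed d)) (𝓝 0))
    (heq : (∀ x, opL d a J u x + fderiv ℝ u x (b x) - lam * u x = 0) ∨
           (∀ x, opLt d a J u x + fderiv ℝ u x (b x) - lam * u x = 0)) :
    ∀ x, u x = 0 := by
  have hdiff : Differentiable ℝ u := hu.differentiable (by norm_num)
  have hK : ∀ y, 0 ≤ a y * J y := fun y =>
    mul_nonneg (le_trans hν.le (ha y).1) (hJ0 y)
  -- at a global max, u x₀ ≤ 0
  have hmaxle : ∀ x₀, (∀ x, u x ≤ u x₀) → u x₀ ≤ 0 := by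
    intro x₀ hmax
    have hD : fderiv ℝ u x₀ = 0 :=
      ((isMaxOn_univ_iff.2 hmax).isLocalMax (by simp)).fderiv_eq_zero
    have hop : ∀ c : Ed d → ℝ, nonlocalOp d (fun y => a y * J y) c u x₀ ≤ 0 :=
      fun c => nonlocalOp_nonpos_at_max _ c hK u hdiff x₀ hmax
    rcases heq with h | h
    · have := h x₀
      rw [hD] at this
      simp only [ContinuousLinearMap.zero_apply] at this
      have h2 : opL d a J u x₀ ≤ 0 := hop (chiJ d J)
      nlinarith [h2, this]
    · have := h x₀
      rw [hD] at this
      simp only [ContinuousLinearMap.zero_apply] at this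
      have h2 : opLt d a J u x₀ ≤ 0 := hop (fun y => if ‖y‖ < 1 then 1 else 0)
      nlinarith [h2, this]
  have hminge : ∀ x₀, (∀ x, u x₀ ≤ u x) → 0 ≤ u x₀ := by
    intro x₀ hmin
    have hD : fderiv ℝ u x₀ = 0 :=
      ((isMinOn_univ_iff.2 hmin).isLocalMin (by simp)).fderiv_eq_zero
    have hop : ∀ c : Ed d → ℝ, 0 ≤ nonlocalOp d (fun y => a y * J y) c u x₀ :=
      fun c => nonlocalOp_nonneg_at_min _ c hK u hdiff x₀ hmin
    rcases heq with h | h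
    · have := h x₀
      rw [hD] at this
      simp only [ContinuousLinearMap.zero_apply] at this
      have h2 : 0 ≤ opL d a J u x₀ := hop (chiJ d J)
      nlinarith [h2, this]
    · have := h x₀
      rw [hD] at this
      simp only [ContinuousLinearMap.zero_apply] at this
      have h2 : 0 ≤ opLt d a J u x₀ := hop (fun y => if ‖y‖ < 1 then 1 else 0)
      nlinarith [h2, this]
  intro x
  refine le_antisymm ?_ ?_
  · by_contra hpos
    push_neg at hpos
    have hev : ∀ᶠ y in cocompact (Ed d), u y ≤ u x :=
      (hu0.eventually (Iio_mem_nhds hpos)).mono fun y hy => le_of_lt hy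
    obtain ⟨x₀, hx₀⟩ := hdiff.continuous.exists_forall_ge' x hev
    exact absurd (lt_of_lt_of_le hpos (hx₀ x)) (not_lt.2 (hmaxle x₀ hx₀))
  · by_contra hneg
    push_neg at hneg
    have hev : ∀ᶠ y in cocompact (Ed d), u x ≤ u y :=
      (hu0.eventually (Ioi_mem_nhds hneg)).mono fun y hy => le_of_lt hy
    obtain ⟨x₀, hx₀⟩ := hdiff.continuous.exists_forall_le' x hev
    exact absurd (lt_of_le_of_lt (hx₀ x) hneg) (not_lt.2 (hminge x₀ hx₀))
end
end

section
/- Suppose there is $C>0$ with $j(s)\ge C\,j(t)$ for all $0<s\le t$, and that condition (H2) holds. Then there exists a constant $N=N(d,\kappa_2,C)>0$ such that for all $0<s\le t$: if $\sigma<1$ then $j(t)\ge N(s/t)^{d+1}j(s)$, and if $\sigma\ge1$ then $j(t)\ge N(s/t)^{d+2}j(s)$. -/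
open MeasureTheory Metric Filter Real
open scoped ENNReal Topology RealInnerProductSpace

noncomputable section

set_option maxHeartbeats 1000000 in
theorem statement8 (d : ℕ) (hd : 1 ≤ d) (J : Ed d → ℝ) (j : ℝ → ℝ)
    (hJm : Measurable J) (hJ0 : ∀ y, 0 ≤ J y) (hJj : ∀ y, J y = j ‖y‖)
    (hLevy : Integrable (fun y : Ed d => min 1 (‖y‖ ^ 2) * J y))
    (C : ℝ) (hC : 0 < C)
    (hdec : ∀ s t : ℝ, 0 < s → s ≤ t → C * j t ≤ j s)
    (κ₂ : ℝ) (hκ₂ : 0 < κ₂)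
    (hH2 : ∀ t : ℝ, 0 < t →
      (sigmaJ d J < 1 →
        ∫ y in {y : Ed d | ‖y‖ ≤ 1}, ‖y‖ * j (t * ‖y‖) ≤ κ₂ * j t) ∧
      (1 ≤ sigmaJ d J →
        ∫ y in {y : Ed d | ‖y‖ ≤ 1}, ‖y‖ ^ 2 * j (t * ‖y‖) ≤ κ₂ * j t)) :
    ∃ N : ℝ, 0 < N ∧ ∀ s t : ℝ, 0 < s → s ≤ t →
      (sigmaJ d J < 1 → N * (s / t) ^ ((d : ℝ) + 1) * j s ≤ j t) ∧
      (1 ≤ sigmaJ d J → N * (s / t) ^ ((d : ℝ) + 2) * j s ≤ j t) := by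
  have hd0 : 0 < d := hd
  -- a unit vector
  set e : Ed d := EuclideanSpace.single (⟨0, hd0⟩ : Fin d) (1 : ℝ) with he_def
  have he : ‖e‖ = 1 := by
    simp [he_def, EuclideanSpace.norm_single]
  have hjJ : ∀ r : ℝ, 0 ≤ r → j r = J (r • e) := by
    intro r hr
    rw [hJj, norm_smul, he, mul_one, Real.norm_eq_abs, abs_of_nonneg hr]
  have hj0 : ∀ r : ℝ, 0 ≤ r → 0 ≤ j r := by
    intro r hr; rw [hjJ r hr]; exact hJ0 _
  have hsetball : {y : Ed d | ‖y‖ ≤ 1} = closedBall (0 : Ed d) 1 := by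
    ext y; simp [mem_closedBall_zero_iff]
  have hJsmul : ∀ (t : ℝ), 0 < t → ∀ y : Ed d, J (t • y) = j (t * ‖y‖) := by
    intro t ht y
    rw [hJj, norm_smul, Real.norm_eq_abs, abs_of_pos ht]
  -- basic integrability on the unit ball with weight ‖z‖^2
  have hbase2 : IntegrableOn (fun z : Ed d => ‖z‖ ^ 2 * J z) (closedBall (0 : Ed d) 1) volume := by
    refine (hLevy.integrableOn).congr_fun ?_ measurableSet_closedBall
    intro z hz
    rw [mem_closedBall_zero_iff] at hz
    have : ‖z‖ ^ 2 ≤ 1 := pow_le_one₀ (norm_nonneg _) hz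
    simp [min_eq_right this]
  -- key integrability transfer: scaling
  have hKey : ∀ (p : ℕ),
      IntegrableOn (fun z : Ed d => ‖z‖ ^ p * J z) (closedBall (0 : Ed d) 1) volume →
      ∀ t : ℝ, 0 < t →
      IntegrableOn (fun y : Ed d => ‖y‖ ^ p * j (t * ‖y‖)) (closedBall (0 : Ed d) 1) volume := by
    intro p hbase t ht
    set F : Ed d → ℝ := fun z => ‖z‖ ^ p * J z with hF_def
    have hFm : AEStronglyMeasurable F volume :=
      ((measurable_norm.pow_const p).mul hJm).aestronglyMeasurable
    set M : ℝ := max t 1 with hM_def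
    have hM1 : (1 : ℝ) ≤ M := le_max_right _ _
    -- outer annulus
    have houter : IntegrableOn F (closedBall (0 : Ed d) M \ closedBall 0 1) volume := by
      refine Measure.integrableOn_of_bounded
        (M := M ^ p * (j 1 / C))
        (((measure_mono Set.diff_subset).trans_lt measure_closedBall_lt_top).ne) hFm ?_
      refine (ae_restrict_mem (measurableSet_closedBall.diff measurableSet_closedBall)).mono ?_
      intro z hz
      obtain ⟨hz1, hz2⟩ := hz
      rw [mem_closedBall_zero_iff] at hz1
      rw [mem_closedBall_zero_iff] at hz2
      push_neg at hz2
      have hj1 : j ‖z‖ ≤ j 1 / C := by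
        rw [le_div_iff₀ hC]
        calc j ‖z‖ * C = C * j ‖z‖ := by ring
          _ ≤ j 1 := hdec 1 ‖z‖ one_pos hz2.le
      have hjz0 : 0 ≤ j ‖z‖ := hj0 _ (norm_nonneg _)
      have : F z = ‖z‖ ^ p * j ‖z‖ := by rw [hF_def]; simp [hJj]
      rw [Real.norm_eq_abs, abs_of_nonneg (by rw [this]; positivity), this]
      exact mul_le_mul (pow_le_pow_left₀ (norm_nonneg _) hz1 p) hj1 hjz0 (by positivity)
    have hFM : IntegrableOn F (closedBall (0 : Ed d) M) volume := by
      refine ((hbase.union houter).mono_set ?_)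
      intro z hz
      rw [mem_closedBall_zero_iff] at hz
      by_cases h1 : ‖z‖ ≤ 1
      · exact Or.inl (mem_closedBall_zero_iff.2 h1)
      · exact Or.inr ⟨mem_closedBall_zero_iff.2 hz, fun hc => h1 (mem_closedBall_zero_iff.1 hc)⟩
    have hFt : IntegrableOn F (closedBall (0 : Ed d) t) volume :=
      hFM.mono_set (closedBall_subset_closedBall (le_max_left _ _))
    -- scaling
    have hind : Integrable ((closedBall (0 : Ed d) t).indicator F) volume :=
      (integrable_indicator_iff measurableSet_closedBall).2 hFt
    have hcomp : Integrable (fun y : Ed d => (closedBall (0 : Ed d) t).indicator F (t • y))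
        volume := hind.comp_smul ht.ne'
    have hswap : (fun y : Ed d => (closedBall (0 : Ed d) t).indicator F (t • y)) =
        (closedBall (0 : Ed d) 1).indicator (fun y => F (t • y)) := by
      funext y
      have hmem : t • y ∈ closedBall (0 : Ed d) t ↔ y ∈ closedBall (0 : Ed d) 1 := by
        rw [mem_closedBall_zero_iff, mem_closedBall_zero_iff, norm_smul, Real.norm_eq_abs,
          abs_of_pos ht]
        constructor
        · intro h; nlinarith
        · intro h; nlinarith
      by_cases h : y ∈ closedBall (0 : Ed d) 1
      · rw [Set.indicator_of_mem (hmem.2 h), Set.indicator_of_mem h]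
      · rw [Set.indicator_of_notMem (fun hc => h (hmem.1 hc)), Set.indicator_of_notMem h]
    rw [hswap] at hcomp
    have hcomp' : IntegrableOn (fun y : Ed d => F (t • y)) (closedBall (0 : Ed d) 1) volume :=
      (integrable_indicator_iff measurableSet_closedBall).1 hcomp
    have hcm := hcomp'.const_mul ((t ^ p)⁻¹)
    refine IntegrableOn.congr_fun hcm ?_ measurableSet_closedBall
    intro y _
    have htp : (t : ℝ) ^ p ≠ 0 := by positivity
    rw [hF_def]
    simp only
    rw [hJsmul t ht, norm_smul, Real.norm_eq_abs, abs_of_pos ht, mul_pow]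
    field_simp
  -- the measure of the unit ball
  set v₁ : ℝ := (volume (ball (0 : Ed d) 1)).toReal with hv₁_def
  have hv₁ : 0 < v₁ := ENNReal.toReal_pos (measure_ball_pos _ _ one_pos).ne' measure_ball_lt_top.ne
  have hhalf : (1 / 2 : ℝ) ^ d < 1 := pow_lt_one₀ (by norm_num) (by norm_num) hd0.ne'
  set N : ℝ := C * (1 - (1 / 2 : ℝ) ^ d) * v₁ / (4 * κ₂) with hN_def
  have hN : 0 < N := by
    have : (0:ℝ) < 1 - (1/2:ℝ)^d := by linarith
    rw [hN_def]; positivity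
  refine ⟨N, hN, ?_⟩
  intro s t hs hst
  have ht : 0 < t := hs.trans_le hst
  set r : ℝ := s / t with hr_def
  have hr0 : 0 < r := div_pos hs ht
  have hr1 : r ≤ 1 := (div_le_one ht).2 hst
  have htr : t * r = s := by rw [hr_def]; field_simp [ht.ne']
  set A : Set (Ed d) := closedBall (0 : Ed d) r \ closedBall 0 (r / 2) with hA_def
  have hAm : MeasurableSet A := measurableSet_closedBall.diff measurableSet_closedBall
  have hAsub : A ⊆ closedBall (0 : Ed d) 1 :=
    Set.diff_subset.trans (closedBall_subset_closedBall hr1)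
  have hμA : (volume A).toReal = (r ^ d - (r / 2) ^ d) * v₁ := by
    rw [hA_def, measure_diff (closedBall_subset_closedBall (by linarith))
      measurableSet_closedBall.nullMeasurableSet measure_closedBall_lt_top.ne,
      Measure.addHaar_closedBall _ _ hr0.le, Measure.addHaar_closedBall _ _ (by linarith : (0:ℝ) ≤ r / 2),
      finrank_euclideanSpace_fin, ← ENNReal.sub_mul (fun _ _ => measure_ball_lt_top.ne),
      ← ENNReal.ofReal_sub _ (by positivity), ENNReal.toReal_mul,
      ENNReal.toReal_ofReal (by have : (r/2)^d ≤ r^d := pow_le_pow_left₀ (by linarith) (by linarith) d; linarith)]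
  have hjs : 0 ≤ j s := hj0 s hs.le
  have hμAfin : volume A ≠ ∞ := ((measure_mono hAsub).trans_lt measure_closedBall_lt_top).ne
  -- main estimate
  have hmain : ∀ p : ℕ,
      IntegrableOn (fun y : Ed d => ‖y‖ ^ p * j (t * ‖y‖)) (closedBall (0 : Ed d) 1) volume →
      (r / 2) ^ p * (C * j s) * ((r ^ d - (r / 2) ^ d) * v₁) ≤
        ∫ y in closedBall (0 : Ed d) 1, ‖y‖ ^ p * j (t * ‖y‖) := by
    intro p hint
    have h2 : (r / 2) ^ p * (C * j s) * (volume A).toReal ≤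
        ∫ y in A, ‖y‖ ^ p * j (t * ‖y‖) := by
      refine setIntegral_ge_of_const_le_real hAm hμAfin ?_ (hint.mono_set hAsub)
      intro y hy
      obtain ⟨hy1, hy2⟩ := hy
      rw [mem_closedBall_zero_iff] at hy1
      rw [mem_closedBall_zero_iff] at hy2
      push_neg at hy2
      have hty : 0 < t * ‖y‖ := by
        have : 0 < ‖y‖ := lt_trans (by linarith) hy2
        positivity
      have hjty : C * j s ≤ j (t * ‖y‖) := by
        refine hdec (t * ‖y‖) s hty ?_
        calc t * ‖y‖ ≤ t * r := by nlinarith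
          _ = s := htr
      exact mul_le_mul (pow_le_pow_left₀ (by linarith) hy2.le p) hjty
        (by positivity) (by positivity)
    have h1 : ∫ y in A, ‖y‖ ^ p * j (t * ‖y‖) ≤
        ∫ y in closedBall (0 : Ed d) 1, ‖y‖ ^ p * j (t * ‖y‖) := by
      refine setIntegral_mono_set hint ?_ (HasSubset.Subset.eventuallyLE hAsub)
      filter_upwards with y
      have : 0 ≤ j (t * ‖y‖) := hj0 _ (by positivity)
      positivity
    rw [hμA] at h2
    exact h2.trans h1
  have hκN : κ₂ * N = C * (1 - (1 / 2 : ℝ) ^ d) * v₁ / 4 := by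
    rw [hN_def]; field_simp
  have hX : (0:ℝ) ≤ C * (1 - (1/2:ℝ)^d) * v₁ := by
    have : (0:ℝ) < 1 - (1/2:ℝ)^d := by linarith
    positivity
  clear_value A r N v₁
  constructor
  · -- σ < 1 case, p = 1
    intro hσ
    -- integrability base for p = 1
    have hbase1 : IntegrableOn (fun z : Ed d => ‖z‖ ^ 1 * J z) (closedBall (0 : Ed d) 1)
        volume := by
      have hS : ((2:ℝ)) ∈ {δ : ℝ | 0 < δ ∧
          IntegrableOn (fun y => ‖y‖ ^ δ * J y) {y : Ed d | ‖y‖ ≤ 1} volume} := by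
        refine ⟨by norm_num, ?_⟩
        rw [hsetball]
        refine hbase2.congr_fun ?_ measurableSet_closedBall
        intro z _
        show ‖z‖ ^ 2 * J z = ‖z‖ ^ (2:ℝ) * J z
        rw [show ((2:ℝ)) = ((2:ℕ):ℝ) by norm_num, Real.rpow_natCast]
      have hbdd : BddBelow {δ : ℝ | 0 < δ ∧
          IntegrableOn (fun y => ‖y‖ ^ δ * J y) {y : Ed d | ‖y‖ ≤ 1} volume} :=
        ⟨0, fun x hx => hx.1.le⟩
      obtain ⟨δ, hδS, hδ1⟩ := (csInf_lt_iff hbdd ⟨2, hS⟩).1 hσ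
      obtain ⟨hδ0, hδint⟩ := hδS
      rw [hsetball] at hδint
      refine (Integrable.mono hδint ?_ ?_)
      · exact (((measurable_norm.pow_const 1).mul hJm).aestronglyMeasurable).restrict
      · refine (ae_restrict_mem measurableSet_closedBall).mono ?_
        intro z hz
        rw [mem_closedBall_zero_iff] at hz
        have hle : ‖z‖ ^ (1:ℕ) ≤ ‖z‖ ^ δ := by
          rcases eq_or_lt_of_le (norm_nonneg z) with h0 | h0
          · rw [← h0]; simp [Real.zero_rpow hδ0.ne']
          · calc ‖z‖ ^ (1:ℕ) = ‖z‖ ^ (1:ℝ) := by rw [Real.rpow_one, pow_one]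
              _ ≤ ‖z‖ ^ δ := Real.rpow_le_rpow_of_exponent_ge h0 hz hδ1.le
        have h1 : 0 ≤ ‖z‖ ^ (1:ℕ) * J z :=
          mul_nonneg (pow_nonneg (norm_nonneg z) 1) (hJ0 z)
        have h2 : 0 ≤ ‖z‖ ^ δ * J z :=
          mul_nonneg (Real.rpow_nonneg (norm_nonneg z) δ) (hJ0 z)
        rw [Real.norm_eq_abs, Real.norm_eq_abs, abs_of_nonneg h1, abs_of_nonneg h2]
        exact mul_le_mul_of_nonneg_right hle (hJ0 z)
    have hint1 := hKey 1 hbase1 t ht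
    have hH2' := (hH2 t ht).1 hσ
    rw [hsetball] at hH2'
    have hm := hmain 1 hint1
    rw [pow_one] at hm
    simp only [pow_one] at hm
    have hchain : (r / 2) * (C * j s) * ((r ^ d - (r / 2) ^ d) * v₁) ≤ κ₂ * j t :=
      hm.trans hH2'
    have hrpow : r ^ ((d : ℝ) + 1) = r ^ (d + 1 : ℕ) := by
      rw [show ((d:ℝ) + 1) = ((d + 1 : ℕ) : ℝ) by push_cast; ring, Real.rpow_natCast]
    rw [hrpow]
    have halg : κ₂ * (N * r ^ (d + 1) * j s) ≤
        (r / 2) * (C * j s) * ((r ^ d - (r / 2) ^ d) * v₁) := by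
      have he1 : κ₂ * (N * r ^ (d + 1) * j s) =
          (C * (1 - (1/2:ℝ)^d) * v₁ / 4) * (r ^ d * r * j s) := by
        rw [← hκN, pow_succ]; ring
      have he2 : (r / 2) * (C * j s) * ((r ^ d - (r / 2) ^ d) * v₁) =
          (C * (1 - (1/2:ℝ)^d) * v₁ / 2) * (r ^ d * r * j s) := by
        rw [div_pow r 2 d, div_pow 1 2 d, one_pow]; ring
      rw [he1, he2]
      have hT : (0:ℝ) ≤ r ^ d * r * j s := by positivity
      nlinarith [mul_nonneg hX hT]
    have := halg.trans hchain
    have := (mul_le_mul_iff_right₀ hκ₂).1 this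
    linarith
  · -- σ ≥ 1 case, p = 2
    intro hσ
    have hint2 := hKey 2 hbase2 t ht
    have hH2' := (hH2 t ht).2 hσ
    rw [hsetball] at hH2'
    have hchain : (r / 2) ^ 2 * (C * j s) * ((r ^ d - (r / 2) ^ d) * v₁) ≤ κ₂ * j t :=
      (hmain 2 hint2).trans hH2'
    have hrpow : r ^ ((d : ℝ) + 2) = r ^ (d + 2 : ℕ) := by
      rw [show ((d:ℝ) + 2) = ((d + 2 : ℕ) : ℝ) by push_cast; ring, Real.rpow_natCast]
    rw [hrpow]
    have halg : κ₂ * (N * r ^ (d + 2) * j s) =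
        (r / 2) ^ 2 * (C * j s) * ((r ^ d - (r / 2) ^ d) * v₁) := by
      have he1 : κ₂ * (N * r ^ (d + 2) * j s) =
          (C * (1 - (1/2:ℝ)^d) * v₁ / 4) * (r ^ d * r * r * j s) := by
        rw [← hκN, show d + 2 = d + 1 + 1 by ring, pow_succ, pow_succ]; ring
      have he2 : (r / 2) ^ 2 * (C * j s) * ((r ^ d - (r / 2) ^ d) * v₁) =
          (C * (1 - (1/2:ℝ)^d) * v₁ / 4) * (r ^ d * r * r * j s) := by
        rw [div_pow r 2 d, div_pow 1 2 d, one_pow]; ring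
      rw [he1, he2]
    have := halg.le.trans hchain
    have := (mul_le_mul_iff_right₀ hκ₂).1 this
    linarith
end
end

section
/- Suppose there is $C>0$ with $j(s)\ge C\,j(t)$ for all $0<s\le t$. Then there exists a constant $N=N(d,C)>0$ such that for every $\xi\in\mathbb{R}^d\setminus\{0\}$, $j(|\xi|)\le N\,|\xi|^{-d}\,\Psi(|\xi|^{-1})$, where $\Psi(\rho)$ denotes the (radially symmetric) value of $\Psi(\xi)=\int_{\mathbb{R}^d}(1-\cos(\xi\cdot y))J(y)\,dy$ at $|\xi|=\rho$. -/
open MeasureTheory Metric Filter Real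
open scoped ENNReal Topology RealInnerProductSpace

noncomputable section

/-- The symbol `Ψ(ξ) = ∫ (1 - cos(ξ·y)) J(y) dy`. -/
def PsiJ (d : ℕ) (J : Ed d → ℝ) (ξ : Ed d) : ℝ :=
  ∫ y, (1 - Real.cos ⟪ξ, y⟫) * J y

lemma coslb_aux (t : ℝ) (h1 : 5 / 8 ≤ t) (h2 : t ≤ 7 / 8) :
    1 / 13 ≤ 1 - Real.cos t := by
  have hb : |t| ≤ π := by
    rw [abs_of_nonneg (by linarith)]
    linarith [Real.pi_gt_three]
  have h6 := Real.cos_le_one_sub_mul_cos_sq hb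
  have hpi0 : 0 < π := Real.pi_pos
  have hsq : π ^ 2 < 10 := by nlinarith [Real.pi_lt_d2]
  have h9 : (5 / 8 : ℝ) ^ 2 ≤ t ^ 2 := by nlinarith
  have h8 : 1 / 13 ≤ 2 / π ^ 2 * t ^ 2 := by
    rw [div_mul_eq_mul_div, le_div_iff₀ (by positivity)]
    nlinarith
  linarith

set_option maxHeartbeats 1000000 in
theorem statement10 (d : ℕ) (hd : 1 ≤ d) (J : Ed d → ℝ) (j : ℝ → ℝ)
    (hJm : Measurable J) (hJ0 : ∀ y, 0 ≤ J y) (hJj : ∀ y, J y = j ‖y‖)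
    (hLevy : Integrable (fun y : Ed d => min 1 (‖y‖ ^ 2) * J y))
    (C : ℝ) (hC : 0 < C)
    (hdec : ∀ s t : ℝ, 0 < s → s ≤ t → C * j t ≤ j s) :
    ∃ N : ℝ, 0 < N ∧ ∀ ξ : Ed d, ξ ≠ 0 → ∀ ξ' : Ed d, ‖ξ'‖ = ‖ξ‖⁻¹ →
      j ‖ξ‖ ≤ N * ‖ξ‖ ^ (-(d : ℝ)) * PsiJ d J ξ' := by
  have hvb_pos : 0 < (volume (ball (0 : Ed d) 1)).toReal :=
    ENNReal.toReal_pos (measure_ball_pos volume 0 one_pos).ne' measure_ball_lt_top.ne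
  set vb : ℝ := (volume (ball (0 : Ed d) 1)).toReal with hvbdef
  refine ⟨13 * 8 ^ d / (C * vb), div_pos (by positivity) (mul_pos hC hvb_pos), ?_⟩
  intro ξ hξ ξ' hξ'
  set r : ℝ := ‖ξ‖ with hrdef
  have hr : 0 < r := norm_pos_iff.mpr hξ
  have hjr : 0 ≤ j r := by
    have h := hJ0 (r • EuclideanSpace.single (⟨0, hd⟩ : Fin d) (1:ℝ))
    rwa [hJj, norm_smul, EuclideanSpace.norm_single, norm_one, mul_one,
      Real.norm_eq_abs, abs_of_pos hr] at h
  set g : Ed d → ℝ := fun y => (1 - Real.cos ⟪ξ', y⟫) * J y with hgdef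
  have hg0 : ∀ y, 0 ≤ g y := fun y =>
    mul_nonneg (sub_nonneg.2 (Real.cos_le_one _)) (hJ0 y)
  have hgm : AEStronglyMeasurable g volume :=
    ((continuous_const.sub
      (Real.continuous_cos.comp (continuous_const.inner continuous_id))).aestronglyMeasurable).mul
      hJm.aestronglyMeasurable
  set M : ℝ := max 2 (‖ξ'‖ ^ 2 / 2) with hMdef
  have hM2 : (2:ℝ) ≤ M := le_max_left _ _
  have hgint : Integrable g := by
    refine (hLevy.const_mul M).mono' hgm ?_
    filter_upwards with y
    rw [Real.norm_eq_abs, abs_of_nonneg (hg0 y)]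
    have hcos : 1 - Real.cos ⟪ξ', y⟫ ≤ M * min 1 (‖y‖ ^ 2) := by
      rcases le_total 1 ‖y‖ with h1 | h1
      · rw [min_eq_left (by nlinarith)]
        have := Real.neg_one_le_cos ⟪ξ', y⟫
        linarith
      · rw [min_eq_right (by nlinarith [norm_nonneg y])]
        have h2 := Real.one_sub_sq_div_two_le_cos (x := ⟪ξ', y⟫)
        have h3 : |⟪ξ', y⟫| ≤ ‖ξ'‖ * ‖y‖ := abs_real_inner_le_norm ξ' y
        have h4 : ⟪ξ', y⟫ ^ 2 ≤ (‖ξ'‖ * ‖y‖) ^ 2 := by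
          nlinarith [abs_nonneg ⟪ξ', y⟫, sq_abs ⟪ξ', y⟫]
        have h5 : ‖ξ'‖ ^ 2 / 2 ≤ M := le_max_right _ _
        nlinarith [norm_nonneg y, norm_nonneg ξ', sq_nonneg ‖y‖]
    calc (1 - Real.cos ⟪ξ', y⟫) * J y ≤ (M * min 1 (‖y‖ ^ 2)) * J y :=
          mul_le_mul_of_nonneg_right hcos (hJ0 y)
      _ = M * (min 1 (‖y‖ ^ 2) * J y) := by ring
  -- the small ball
  set c : Ed d := (3 / 4 * r ^ 2) • ξ' with hcdef
  set B : Set (Ed d) := closedBall c (r / 8) with hBdef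
  have hnc : ‖c‖ = 3 / 4 * r := by
    rw [hcdef, norm_smul, hξ', Real.norm_eq_abs,
      abs_of_pos (by nlinarith : (0:ℝ) < 3 / 4 * r ^ 2)]
    field_simp
  have hic : ⟪ξ', c⟫ = 3 / 4 := by
    rw [hcdef, real_inner_smul_right, real_inner_self_eq_norm_sq, hξ']
    field_simp
  -- pointwise lower bound on B
  have key : ∀ y ∈ B, 1 / 13 * (C * j r) ≤ g y := by
    intro y hy
    have hyc : ‖y - c‖ ≤ r / 8 := by
      rwa [hBdef, mem_closedBall, dist_eq_norm] at hy
    have hinn : |⟪ξ', y - c⟫| ≤ 1 / 8 := by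
      refine (abs_real_inner_le_norm _ _).trans ?_
      rw [hξ']
      rw [inv_mul_le_iff₀ hr]
      calc ‖y - c‖ ≤ r / 8 := hyc
        _ = r * (1 / 8) := by ring
    have hsplit : ⟪ξ', y⟫ = 3 / 4 + ⟪ξ', y - c⟫ := by
      rw [inner_sub_right, hic]; ring
    have ht1 : 5 / 8 ≤ ⟪ξ', y⟫ := by
      rw [hsplit]; have := abs_le.1 hinn; linarith
    have ht2 : ⟪ξ', y⟫ ≤ 7 / 8 := by
      rw [hsplit]; have := abs_le.1 hinn; linarith
    have hcoslb : 1 / 13 ≤ 1 - Real.cos ⟪ξ', y⟫ := coslb_aux _ ht1 ht2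
    -- norm bounds on y
    have hny1 : ‖y‖ ≤ r := by
      calc ‖y‖ = ‖c + (y - c)‖ := by rw [add_sub_cancel]
        _ ≤ ‖c‖ + ‖y - c‖ := norm_add_le _ _
        _ ≤ 3 / 4 * r + r / 8 := by rw [hnc]; linarith
        _ ≤ r := by linarith
    have hny0 : 0 < ‖y‖ := by
      have := norm_sub_norm_le c y
      rw [norm_sub_rev y c] at hyc
      have h11 : ‖c‖ - ‖y‖ ≤ r / 8 := le_trans (norm_sub_norm_le c y) hyc
      rw [hnc] at h11
      linarith
    have hJlb : C * j r ≤ J y := by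
      rw [hJj]; exact hdec ‖y‖ r hny0 hny1
    exact mul_le_mul hcoslb hJlb (mul_nonneg hC.le hjr)
      (sub_nonneg.2 (Real.cos_le_one _))
  have hBmeas : MeasurableSet B := measurableSet_closedBall
  have hvolB_lt : volume B < ⊤ := measure_closedBall_lt_top
  have step1 : ∫ _ in B, 1 / 13 * (C * j r) ≤ ∫ y in B, g y :=
    setIntegral_mono_on (integrableOn_const hvolB_lt.ne)
      hgint.integrableOn hBmeas key
  have step2 : ∫ y in B, g y ≤ ∫ y, g y :=
    setIntegral_le_integral hgint (Eventually.of_forall hg0)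
  have hvolB : (volume B).toReal = (r / 8) ^ d * vb := by
    rw [hBdef, Measure.addHaar_closedBall volume c (by positivity : (0:ℝ) ≤ r / 8),
      ENNReal.toReal_mul, ENNReal.toReal_ofReal (by positivity)]
    congr 2
    exact finrank_euclideanSpace_fin
  have hconst : ∫ _ in B, 1 / 13 * (C * j r) = (r / 8) ^ d * vb * (1 / 13 * (C * j r)) := by
    rw [setIntegral_const, smul_eq_mul, measureReal_def, hvolB]
  have hPsi : (r / 8) ^ d * vb * (1 / 13 * (C * j r)) ≤ PsiJ d J ξ' := by
    have : PsiJ d J ξ' = ∫ y, g y := rfl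
    rw [this, ← hconst]
    exact le_trans step1 step2
  -- final arithmetic
  have hrpow : r ^ (-(d : ℝ)) = (r ^ d)⁻¹ := by
    rw [Real.rpow_neg hr.le, Real.rpow_natCast]
  rw [hrpow]
  have ha : (0:ℝ) < (r / 8) ^ d * vb * (C / 13) := by positivity
  have h12 : j r ≤ PsiJ d J ξ' / ((r / 8) ^ d * vb * (C / 13)) := by
    rw [le_div_iff₀ ha]
    calc j r * ((r / 8) ^ d * vb * (C / 13)) = (r / 8) ^ d * vb * (1 / 13 * (C * j r)) := by ring
      _ ≤ PsiJ d J ξ' := hPsi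
  refine h12.trans (le_of_eq ?_)
  have h8 : ((8:ℝ)) ^ d ≠ 0 := by positivity
  have hrd : r ^ d ≠ 0 := by positivity
  rw [div_pow]
  field_simp
end
end

section
/- For any $\alpha\in(0,1)$ there exist $\eta_1,\eta_2\in(0,1/4)$, depending only on $\alpha$, such that for every $b\in\mathbb{R}^d\setminus\{0\}$ and every nonnegative measurable function $\mathcal{K}:\mathbb{R}^d\to[0,\infty)$, $\int_{\mathcal{C}}\big(|b+2z|^{\alpha}+|b-2z|^{\alpha}-2|b|^{\alpha}\big)\mathcal{K}(z)\,dz\ \le\ -\,2^{\alpha-3}\alpha(1-\alpha)\int_{\mathcal{C}}|b|^{\alpha-2}|z|^{2}\mathcal{K}(z)\,dz$, where $\mathcal{C}=\{z\in\mathbb{R}^d:\ |z|<\eta_1|b|\ \text{and}\ |z\cdot b|\ge(1-\eta_2)|b||z|\}$. In fact, the pointwise inequality $|b+2z|^{\alpha}+|b-2z|^{\alpha}-2|b|^{\alpha}\le-2^{\alpha-3}\alpha(1-\alpha)|b|^{\alpha-2}|z|^{2}$ holds for every $z\in\mathcal{C}$. -/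
open MeasureTheory Metric Filter Real
open scoped ENNReal Topology RealInnerProductSpace

set_option maxHeartbeats 1600000

noncomputable section

/-- Second-order mean value theorem, expansion around the left endpoint. -/
lemma sec_mvt_left {f f' f'' : ℝ → ℝ} {a b : ℝ} (hab : a < b)
    (h1 : ∀ x ∈ Set.Icc a b, HasDerivAt f (f' x) x)
    (h2 : ∀ x ∈ Set.Icc a b, HasDerivAt f' (f'' x) x) :
    ∃ ξ ∈ Set.Ioo a b, f b = f a + f' a * (b - a) + f'' ξ / 2 * (b - a) ^ 2 := by
  have hba : b - a ≠ 0 := sub_ne_zero.2 hab.ne'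
  set lam : ℝ := (f b - f a - f' a * (b - a)) / (b - a) ^ 2 with hlam
  set g : ℝ → ℝ := fun x => f x - f a - f' a * (x - a) - lam * (x - a) ^ 2 with hg
  have hg' : ∀ x ∈ Set.Icc a b, HasDerivAt g (f' x - f' a - 2 * lam * (x - a)) x := by
    intro x hx
    have := ((h1 x hx).sub_const (f a)).sub
      (((hasDerivAt_id x).sub_const a).const_mul (f' a))
    have h2' := (((hasDerivAt_id x).sub_const a).pow 2).const_mul lam
    refine (this.sub h2').congr_deriv ?_
    simp [pow_one]
    ring
  have hga : g a = 0 := by simp [hg]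
  have hgb : g b = 0 := by
    simp only [hg]
    rw [hlam]
    field_simp
    ring
  obtain ⟨ξ₁, hξ₁, hgξ₁⟩ := exists_hasDerivAt_eq_zero hab
    (fun x hx => ((hg' x hx).continuousAt.continuousWithinAt)) (hga.trans hgb.symm)
    (fun x hx => hg' x (Set.mem_Icc_of_Ioo hx))
  -- now Rolle for g' on [a, ξ₁]
  set g1 : ℝ → ℝ := fun x => f' x - f' a - 2 * lam * (x - a) with hg1
  have hg1' : ∀ x ∈ Set.Icc a ξ₁, HasDerivAt g1 (f'' x - 2 * lam) x := by
    intro x hx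
    have hxm : x ∈ Set.Icc a b := ⟨hx.1, hx.2.trans hξ₁.2.le⟩
    have := ((h2 x hxm).sub_const (f' a)).sub
      (((hasDerivAt_id x).sub_const a).const_mul (2 * lam))
    refine this.congr_deriv ?_
    ring
  have hg1a : g1 a = 0 := by simp [hg1]
  have hg1ξ : g1 ξ₁ = 0 := hgξ₁
  obtain ⟨ξ₂, hξ₂, h0⟩ := exists_hasDerivAt_eq_zero hξ₁.1
    (fun x hx => ((hg1' x hx).continuousAt.continuousWithinAt)) (hg1a.trans hg1ξ.symm)
    (fun x hx => hg1' x (Set.mem_Icc_of_Ioo hx))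
  refine ⟨ξ₂, ⟨hξ₂.1, hξ₂.2.trans hξ₁.2⟩, ?_⟩
  have hlam2 : f'' ξ₂ = 2 * lam := by linarith [h0]
  rw [hlam2, hlam]
  field_simp
  ring

/-- Second-order mean value theorem, expansion around the right endpoint. -/
lemma sec_mvt_right {f f' f'' : ℝ → ℝ} {a b : ℝ} (hab : a < b)
    (h1 : ∀ x ∈ Set.Icc a b, HasDerivAt f (f' x) x)
    (h2 : ∀ x ∈ Set.Icc a b, HasDerivAt f' (f'' x) x) :
    ∃ ξ ∈ Set.Ioo a b, f a = f b + f' b * (a - b) + f'' ξ / 2 * (a - b) ^ 2 := by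
  -- reflect: F x = f (a + b - x)
  have key : ∀ x ∈ Set.Icc a b, a + b - x ∈ Set.Icc a b := by
    intro x hx; exact ⟨by linarith [hx.2], by linarith [hx.1]⟩
  have hrefl : ∀ x, HasDerivAt (fun x : ℝ => a + b - x) (-1) x := by
    intro x
    simpa using (hasDerivAt_id x).const_sub (a + b)
  obtain ⟨ξ, hξ, h⟩ := sec_mvt_left (f := fun x => f (a + b - x))
    (f' := fun x => f' (a + b - x) * (-1)) (f'' := fun x => f'' (a + b - x)) hab
    (fun x hx => (h1 _ (key x hx)).comp x (hrefl x))
    (fun x hx => by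
      have := ((h2 _ (key x hx)).comp x (hrefl x)).const_mul (-1 : ℝ)
      refine HasDerivAt.congr_deriv (HasDerivAt.congr_of_eventuallyEq this (Filter.Eventually.of_forall fun y => ?_)) ?_
      · simp [Function.comp]
      · ring)
  refine ⟨a + b - ξ, ⟨by linarith [hξ.2], by linarith [hξ.1]⟩, ?_⟩
  simp only [add_sub_cancel_left, add_sub_cancel_right] at h
  nlinarith [h]

lemma rpow_hasDeriv1 {β x : ℝ} (hx : x ≠ 0) :
    HasDerivAt (fun y : ℝ => y ^ β) (β * x ^ (β - 1)) x :=
  Real.hasDerivAt_rpow_const (Or.inl hx)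

lemma rpow_hasDeriv2 {β x : ℝ} (hx : x ≠ 0) :
    HasDerivAt (fun y : ℝ => β * y ^ (β - 1)) (β * (β - 1) * x ^ (β - 2)) x := by
  have := (Real.hasDerivAt_rpow_const (p := β - 1) (Or.inl hx)).const_mul β
  refine this.congr_deriv ?_
  have : β - 1 - 1 = β - 2 := by ring
  rw [← this]; ring

/-- Taylor expansion of `x ^ β` around `1` with remainder bounds. -/
lemma rpow_taylor_one {β lo hi x : ℝ} (hβ0 : 0 < β) (hβ1 : β < 1) (hlo : 0 < lo)
    (hlo1 : lo ≤ 1) (hhi1 : 1 ≤ hi) (hx : x ∈ Set.Icc lo hi) :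
    x ^ β ≤ 1 + β * (x - 1) - β * (1 - β) / 2 * hi ^ (β - 2) * (x - 1) ^ 2 ∧
    1 + β * (x - 1) - β * (1 - β) / 2 * lo ^ (β - 2) * (x - 1) ^ 2 ≤ x ^ β := by
  -- first get: ∃ ξ ∈ [lo, hi] (with lo ≤ ξ, ξ ≤ hi, 0 < ξ) such that
  -- x ^ β = 1 + β (x-1) + β(β-1)/2 * ξ^(β-2) * (x-1)^2
  have key : ∃ ξ : ℝ, lo ≤ ξ ∧ ξ ≤ hi ∧
      x ^ β = 1 + β * (x - 1) + β * (β - 1) * ξ ^ (β - 2) / 2 * (x - 1) ^ 2 := by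
    rcases lt_trichotomy x 1 with h | h | h
    · obtain ⟨ξ, hξ, he⟩ := sec_mvt_right (f := fun y : ℝ => y ^ β)
        (f' := fun y => β * y ^ (β - 1)) (f'' := fun y => β * (β - 1) * y ^ (β - 2)) h
        (fun y hy => rpow_hasDeriv1 (by linarith [hx.1, hy.1] : y ≠ 0))
        (fun y hy => rpow_hasDeriv2 (by nlinarith [hx.1, hy.1] : y ≠ 0))
      refine ⟨ξ, by linarith [hξ.1, hx.1], by linarith [hξ.2, hx.2], ?_⟩
      simp only [Real.one_rpow] at he
      rw [he]; ring
    · exact ⟨1, hlo1, hhi1, by rw [h]; simp⟩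
    · obtain ⟨ξ, hξ, he⟩ := sec_mvt_left (f := fun y : ℝ => y ^ β)
        (f' := fun y => β * y ^ (β - 1)) (f'' := fun y => β * (β - 1) * y ^ (β - 2)) h
        (fun y hy => rpow_hasDeriv1 (by nlinarith [hy.1] : y ≠ 0))
        (fun y hy => rpow_hasDeriv2 (by nlinarith [hy.1] : y ≠ 0))
      refine ⟨ξ, by linarith [hξ.1], by linarith [hξ.2, hx.2], ?_⟩
      simp only [Real.one_rpow] at he
      rw [he]; ring
  obtain ⟨ξ, hξlo, hξhi, he⟩ := key
  have hξ0 : 0 < ξ := lt_of_lt_of_le hlo hξlo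
  have hb1 : hi ^ (β - 2) ≤ ξ ^ (β - 2) :=
    Real.rpow_le_rpow_of_nonpos hξ0 hξhi (by linarith)
  have hb2 : ξ ^ (β - 2) ≤ lo ^ (β - 2) :=
    Real.rpow_le_rpow_of_nonpos hlo hξlo (by linarith)
  have hsq : (0:ℝ) ≤ (x - 1) ^ 2 := sq_nonneg _
  have hc : (0:ℝ) ≤ β * (1 - β) := mul_nonneg hβ0.le (by linarith)
  constructor
  · rw [he]
    nlinarith [mul_le_mul_of_nonneg_left (mul_le_mul_of_nonneg_right hb1 hsq) hc]
  · rw [he]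
    nlinarith [mul_le_mul_of_nonneg_left (mul_le_mul_of_nonneg_right hb2 hsq) hc]

lemma rpow_neg_two_eq {x : ℝ} (hx : 0 ≤ x) : x ^ (-2 : ℝ) = (x^2)⁻¹ := by
  rw [show (-2 : ℝ) = -((2:ℕ):ℝ) by norm_num, Real.rpow_neg hx, Real.rpow_natCast]

/-- Core normalized inequalities. -/
lemma core_ineq {α t w : ℝ} (hα : 0 < α) (hα1 : α < 1) (ht : 0 ≤ t)
    (htη : t ≤ (1 - α) / 100) (hw1 : (1 - (1 - α) / 100) * t ≤ |w|) (hw2 : |w| ≤ t) :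
    (1 + 4*w + 4*t^2) ^ (α/2) + (1 - 4*w + 4*t^2) ^ (α/2) - 2 ≤
      -((2:ℝ) ^ (α - 3) * α * (1 - α)) * t^2 ∧
    2 - (1 + 4*w + 4*t^2) ^ (α/2) - (1 - 4*w + 4*t^2) ^ (α/2) ≤ 16 * t^2 := by
  obtain ⟨c, hc0, hc4, hceq⟩ : ∃ c : ℝ, 0 < c ∧ c ≤ 1/4 ∧ (2:ℝ) ^ (α - 3) = c := by
    refine ⟨_, Real.rpow_pos_of_pos (by norm_num) _, ?_, rfl⟩
    have h1 : (2:ℝ) ^ (α - 3) ≤ (2:ℝ) ^ (-2 : ℝ) :=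
      Real.rpow_le_rpow_of_exponent_le one_le_two (by linarith)
    rw [rpow_neg_two_eq (by norm_num)] at h1
    norm_num at h1
    linarith
  rw [hceq]
  set η : ℝ := (1 - α) / 100 with hηdef
  have hη : η = (1 - α) / 100 := hηdef
  clear_value η
  have hη0 : 0 < η := by rw [hη]; linarith
  have hη1 : η ≤ 1 / 100 := by rw [hη]; linarith
  set β : ℝ := α / 2 with hβdef
  have hβ : β = α / 2 := hβdef
  clear_value β
  have hβ0 : 0 < β := by rw [hβ]; linarith
  have hβ1 : β < 1 := by rw [hβ]; linarith
  have hwt : -t ≤ w ∧ w ≤ t := abs_le.1 hw2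
  have htη' : t ≤ η := htη
  have ht2 : t^2 ≤ η * t := by nlinarith only [ht, htη']
  have hlo : (0:ℝ) < 1 - 4*η := by linarith
  have hlo1 : (1:ℝ) - 4*η ≤ 1 := by linarith
  have hhi1 : (1:ℝ) ≤ 1 + 5*η := by linarith
  have hXm : 1 + 4*w + 4*t^2 ∈ Set.Icc (1 - 4*η) (1 + 5*η) := by
    constructor
    · nlinarith only [hwt.1, sq_nonneg t, htη', ht, hη0]
    · nlinarith only [hwt.2, htη', ht, ht2, hη0, hη1]
  have hYm : 1 - 4*w + 4*t^2 ∈ Set.Icc (1 - 4*η) (1 + 5*η) := by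
    constructor
    · nlinarith only [hwt.2, sq_nonneg t, htη', ht, hη0]
    · nlinarith only [hwt.1, htη', ht, ht2, hη0, hη1]
  obtain ⟨hXu, hXl⟩ := rpow_taylor_one hβ0 hβ1 hlo hlo1 hhi1 hXm
  obtain ⟨hYu, hYl⟩ := rpow_taylor_one hβ0 hβ1 hlo hlo1 hhi1 hYm
  obtain ⟨A, hAeq, hApos, hA1⟩ :
      ∃ A : ℝ, (1 + 5*η : ℝ) ^ (β - 2) = A ∧ 0 < A ∧ 1 - 10*η ≤ A := by
    refine ⟨_, rfl, Real.rpow_pos_of_pos (by linarith) _, ?_⟩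
    have h1 : (1 + 5*η : ℝ) ^ (-2 : ℝ) ≤ (1 + 5*η : ℝ) ^ (β - 2) :=
      Real.rpow_le_rpow_of_exponent_le hhi1 (by linarith)
    rw [rpow_neg_two_eq (by linarith)] at h1
    have hp : (0:ℝ) < (1 + 5*η)^2 := by positivity
    have key : (1 - 10*η) * (1 + 5*η)^2 ≤ 1 := by
      nlinarith only [sq_nonneg η, mul_nonneg (mul_nonneg hη0.le hη0.le) hη0.le, hη0]
    have h3 : 1 - 10*η ≤ ((1 + 5*η : ℝ)^2)⁻¹ := by
      calc 1 - 10*η = (1 - 10*η) * (1 + 5*η)^2 / (1 + 5*η)^2 := by field_simp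
        _ ≤ 1 / (1 + 5*η)^2 := by gcongr
        _ = ((1 + 5*η : ℝ)^2)⁻¹ := one_div _
    linarith
  obtain ⟨B, hBeq, hBpos, hB1⟩ :
      ∃ B : ℝ, (1 - 4*η : ℝ) ^ (β - 2) = B ∧ 0 < B ∧ B ≤ 2 := by
    refine ⟨_, rfl, Real.rpow_pos_of_pos hlo _, ?_⟩
    have h1 : (1 - 4*η : ℝ) ^ (β - 2) ≤ (1 - 4*η : ℝ) ^ (-2 : ℝ) :=
      Real.rpow_le_rpow_of_exponent_ge hlo hlo1 (by linarith)
    rw [rpow_neg_two_eq (by linarith)] at h1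
    have hp : (0:ℝ) < (1 - 4*η)^2 := by positivity
    have key : (1:ℝ) ≤ 2 * (1 - 4*η)^2 := by nlinarith only [sq_nonneg η, hη0, hη1]
    have h3 : ((1 - 4*η : ℝ)^2)⁻¹ ≤ 2 := by
      calc ((1 - 4*η : ℝ)^2)⁻¹ = 1 / (1 - 4*η)^2 := (one_div _).symm
        _ ≤ (2 * (1 - 4*η)^2) / (1 - 4*η)^2 := by gcongr
        _ = 2 := by field_simp
    linarith
  rw [hAeq] at hXu hYu
  rw [hBeq] at hXl hYl
  have hw2' : (1 - 2*η) * t^2 ≤ w^2 := by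
    have h0 : 0 ≤ (1-η)*t := mul_nonneg (by linarith) ht
    nlinarith only [mul_self_le_mul_self h0 hw1, sq_abs w, sq_nonneg (η*t)]
  have hwsq : w^2 ≤ t^2 := by nlinarith only [hw2, sq_abs w, abs_nonneg w, ht]
  have ht4 : t^4 ≤ t^2 := by
    have h1 : t^2 ≤ 1 := by nlinarith only [ht, htη', hη1]
    nlinarith only [mul_le_mul_of_nonneg_left h1 (sq_nonneg t)]
  have hββ : (0:ℝ) ≤ 16*β*(1-β) := by nlinarith only [hβ0, hβ1]
  have hββA : (0:ℝ) ≤ 16*β*(1-β)*A := mul_nonneg hββ hApos.le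
  constructor
  · -- main upper bound
    have hfin : 8*β - 16*β*(1-β)*A*(1-2*η) + c*α*(1-α) ≤ 0 := by
      have h2η : (0:ℝ) ≤ 1-2*η := by linarith
      have e1 : 16*β*(1-β)*((1-10*η)*(1-2*η)) ≤ 16*β*(1-β)*(A*(1-2*η)) :=
        mul_le_mul_of_nonneg_left (mul_le_mul_of_nonneg_right hA1 h2η) hββ
      have e3 : c*α*(1-α) ≤ (1/4)*α*(1-α) := by
        nlinarith only [hc4, mul_pos hα (by linarith : (0:ℝ) < 1-α)]
      have e2 : 8*β - 16*β*(1-β)*((1-10*η)*(1-2*η)) + (1/4)*α*(1-α) ≤ 0 := by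
        rw [hβ, hη]
        nlinarith only [hα, hα1, sq_nonneg α, sq_nonneg (1-α),
          mul_pos hα (by linarith : (0:ℝ) < 1-α),
          mul_nonneg (mul_nonneg hα.le hα.le) hα.le,
          mul_nonneg (mul_nonneg hα.le hα.le) (by linarith : (0:ℝ) ≤ 1-α),
          mul_nonneg (mul_nonneg hα.le (by linarith : (0:ℝ) ≤ 1-α)) (by linarith : (0:ℝ) ≤ 1-α)]
      linarith only [e1, e2, e3]
    have m1 : 16*β*(1-β)*A*((1-2*η)*t^2) ≤ 16*β*(1-β)*A*(w^2) :=
      mul_le_mul_of_nonneg_left hw2' hββA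
    have m2 : (8*β - 16*β*(1-β)*A*(1-2*η) + c*α*(1-α))*t^2 ≤ 0 :=
      mul_nonpos_of_nonpos_of_nonneg hfin (sq_nonneg t)
    have m3 : 0 ≤ 16*β*(1-β)*A*t^4 :=
      mul_nonneg hββA (by positivity)
    linarith only [hXu, hYu, m1, m2, m3]
  · -- lower bound
    have hβB : β * (1-β) / 2 * B ≤ 1/4 := by nlinarith only [sq_nonneg (β - 1/2), hBpos, hB1, hβ0, hβ1, mul_nonneg (mul_nonneg hβ0.le (by linarith : (0:ℝ) ≤ 1-β)) (by linarith : (0:ℝ) ≤ 2 - B)]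
    have hDl : (0:ℝ) ≤ β * (1-β) / 2 * B := by nlinarith only [hBpos, hβ0, hβ1, mul_pos (mul_pos hβ0 (by linarith : (0:ℝ) < 1-β)) hBpos]
    have mw : (β*(1-β)/2*B)*(32*w^2) ≤ (1/4)*(32*w^2) :=
      mul_le_mul_of_nonneg_right hβB (by positivity)
    have mt4 : (β*(1-β)/2*B)*(32*t^4) ≤ (1/4)*(32*t^4) :=
      mul_le_mul_of_nonneg_right hβB (by positivity)
    have mβt : 0 ≤ 8*β*t^2 := by positivity
    linarith only [hXl, hYl, mw, mt4, hwsq, ht4, mβt]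

lemma sq_rpow_half (x : ℝ) (hx : 0 ≤ x) (α : ℝ) : (x^2)^(α/2) = x^α := by
  rw [← Real.rpow_natCast x 2, ← Real.rpow_mul hx]
  congr 1
  ring

lemma pointwise_vec {d : ℕ} (α : ℝ) (hα : 0 < α) (hα1 : α < 1) (b z : Ed d) (hb : b ≠ 0)
    (h1 : ‖z‖ ≤ ((1-α)/100) * ‖b‖) (h2 : (1 - (1-α)/100) * ‖b‖ * ‖z‖ ≤ |⟪z, b⟫|) :
    ‖b + (2:ℝ) • z‖ ^ α + ‖b - (2:ℝ) • z‖ ^ α - 2 * ‖b‖ ^ α ≤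
      -((2:ℝ) ^ (α - 3) * α * (1 - α) * ‖b‖ ^ (α - 2) * ‖z‖ ^ 2) ∧
    2 * ‖b‖ ^ α - ‖b + (2:ℝ) • z‖ ^ α - ‖b - (2:ℝ) • z‖ ^ α ≤
      16 * (‖b‖ ^ (α - 2) * ‖z‖ ^ 2) := by
  have hr : (0:ℝ) < ‖b‖ := norm_pos_iff.2 hb
  set r : ℝ := ‖b‖ with hrdef
  set t : ℝ := ‖z‖ / r with htdef
  set w : ℝ := ⟪z, b⟫ / r^2 with hwdef
  have hzr : ‖z‖ = r * t := by rw [htdef]; field_simp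
  have hq : ⟪z, b⟫ = r^2 * w := by rw [hwdef]; field_simp
  have ht : 0 ≤ t := div_nonneg (norm_nonneg z) hr.le
  have htη : t ≤ (1-α)/100 := by
    rw [htdef, div_le_iff₀ hr]
    calc ‖z‖ ≤ ((1-α)/100) * r := h1
      _ = (1-α)/100 * r := by ring
  have hw2 : |w| ≤ t := by
    have hcs : |⟪z, b⟫| ≤ ‖z‖ * ‖b‖ := abs_real_inner_le_norm z b
    rw [hwdef, htdef, abs_div, abs_of_pos (by positivity : (0:ℝ) < r^2)]
    rw [div_le_div_iff₀ (by positivity) hr]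
    calc |⟪z, b⟫| * r ≤ (‖z‖ * r) * r := by
          apply mul_le_mul_of_nonneg_right _ hr.le
          rw [← hrdef] at hcs; exact hcs
      _ = ‖z‖ * r^2 := by ring
  have hw1 : (1 - (1-α)/100) * t ≤ |w| := by
    rw [hwdef, htdef, abs_div, abs_of_pos (by positivity : (0:ℝ) < r^2)]
    rw [show (1 - (1-α)/100) * (‖z‖ / r) = ((1 - (1-α)/100) * ‖z‖) / r from by ring,
      div_le_div_iff₀ hr (by positivity)]
    calc (1 - (1-α)/100) * ‖z‖ * r^2 = ((1 - (1-α)/100) * r * ‖z‖) * r := by ring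
      _ ≤ |⟪z, b⟫| * r := mul_le_mul_of_nonneg_right h2 hr.le
  -- norm identities
  have hX0 : (0:ℝ) ≤ 1 + 4*w + 4*t^2 := by
    have := abs_le.1 hw2
    nlinarith [this.1, sq_nonneg t, ht, htη, hα1, hα]
  have hY0 : (0:ℝ) ≤ 1 - 4*w + 4*t^2 := by
    have := abs_le.1 hw2
    nlinarith [this.2, sq_nonneg t, ht, htη, hα1, hα]
  have hip : ⟪b, (2:ℝ) • z⟫ = 2 * ⟪z, b⟫ := by
    rw [real_inner_smul_right, real_inner_comm]
  have hns : ‖(2:ℝ) • z‖ = 2 * ‖z‖ := by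
    rw [norm_smul]
    simp
  have hXsq : ‖b + (2:ℝ) • z‖^2 = r^2 * (1 + 4*w + 4*t^2) := by
    rw [norm_add_sq_real, hip, hns, hq, hzr]
    ring
  have hYsq : ‖b - (2:ℝ) • z‖^2 = r^2 * (1 - 4*w + 4*t^2) := by
    rw [norm_sub_sq_real, hip, hns, hq, hzr]
    ring
  have hXa : ‖b + (2:ℝ) • z‖ ^ α = r^α * (1 + 4*w + 4*t^2)^(α/2) := by
    rw [← sq_rpow_half _ (norm_nonneg _) α, hXsq,
      Real.mul_rpow (by positivity) hX0, sq_rpow_half r hr.le]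
  have hYa : ‖b - (2:ℝ) • z‖ ^ α = r^α * (1 - 4*w + 4*t^2)^(α/2) := by
    rw [← sq_rpow_half _ (norm_nonneg _) α, hYsq,
      Real.mul_rpow (by positivity) hY0, sq_rpow_half r hr.le]
  have hrα : (0:ℝ) < r^α := Real.rpow_pos_of_pos hr α
  have hRHS : r ^ (α-2) * ‖z‖^2 = r^α * t^2 := by
    rw [hzr, mul_pow, ← mul_assoc, ← Real.rpow_natCast r 2, ← Real.rpow_add hr]
    norm_num
  obtain ⟨hu, hl⟩ := core_ineq hα hα1 ht htη hw1 hw2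
  constructor
  · rw [hXa, hYa]
    have := mul_le_mul_of_nonneg_left hu hrα.le
    calc r^α * (1 + 4*w + 4*t^2)^(α/2) + r^α * (1 - 4*w + 4*t^2)^(α/2) - 2*r^α
        = r^α * ((1 + 4*w + 4*t^2)^(α/2) + (1 - 4*w + 4*t^2)^(α/2) - 2) := by ring
      _ ≤ r^α * (-((2:ℝ)^(α-3) * α * (1-α)) * t^2) := this
      _ = -((2:ℝ)^(α-3) * α * (1-α) * (r^α * t^2)) := by ring
      _ = -((2:ℝ)^(α-3) * α * (1-α) * (r^(α-2) * ‖z‖^2)) := by rw [hRHS]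
      _ = -((2:ℝ)^(α-3) * α * (1-α) * r^(α-2) * ‖z‖^2) := by ring
  · rw [hXa, hYa]
    have := mul_le_mul_of_nonneg_left hl hrα.le
    calc 2*r^α - r^α * (1 + 4*w + 4*t^2)^(α/2) - r^α * (1 - 4*w + 4*t^2)^(α/2)
        = r^α * (2 - (1 + 4*w + 4*t^2)^(α/2) - (1 - 4*w + 4*t^2)^(α/2)) := by ring
      _ ≤ r^α * (16 * t^2) := this
      _ = 16 * (r^α * t^2) := by ring
      _ = 16 * (r^(α-2) * ‖z‖^2) := by rw [hRHS]


theorem statement12 (d : ℕ) (hd : 1 ≤ d) (α : ℝ) (hα : 0 < α) (hα1 : α < 1) :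
    ∃ η₁ η₂ : ℝ, 0 < η₁ ∧ η₁ < 1/4 ∧ 0 < η₂ ∧ η₂ < 1/4 ∧
      ∀ b : Ed d, b ≠ 0 →
        (∀ z : Ed d, z ∈ {z : Ed d | ‖z‖ < η₁ * ‖b‖ ∧ (1 - η₂) * ‖b‖ * ‖z‖ ≤ |⟪z, b⟫|} →
          ‖b + (2 : ℝ) • z‖ ^ α + ‖b - (2 : ℝ) • z‖ ^ α - 2 * ‖b‖ ^ α ≤
            -((2 : ℝ) ^ (α - 3) * α * (1 - α) * ‖b‖ ^ (α - 2) * ‖z‖ ^ 2)) ∧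
        (∀ K : Ed d → ℝ, Measurable K → (∀ z, 0 ≤ K z) →
          ∫ z in {z : Ed d | ‖z‖ < η₁ * ‖b‖ ∧ (1 - η₂) * ‖b‖ * ‖z‖ ≤ |⟪z, b⟫|},
              (‖b + (2 : ℝ) • z‖ ^ α + ‖b - (2 : ℝ) • z‖ ^ α - 2 * ‖b‖ ^ α) * K z ≤
            -((2 : ℝ) ^ (α - 3) * α * (1 - α)) *
              ∫ z in {z : Ed d | ‖z‖ < η₁ * ‖b‖ ∧ (1 - η₂) * ‖b‖ * ‖z‖ ≤ |⟪z, b⟫|},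
                ‖b‖ ^ (α - 2) * ‖z‖ ^ 2 * K z) := by
  refine ⟨(1-α)/100, (1-α)/100, by linarith, by linarith, by linarith, by linarith, ?_⟩
  intro b hb
  set S : Set (Ed d) :=
    {z : Ed d | ‖z‖ < (1-α)/100 * ‖b‖ ∧ (1 - (1-α)/100) * ‖b‖ * ‖z‖ ≤ |⟪z, b⟫|} with hS
  have hSm : MeasurableSet S := by
    have h1 : IsOpen {z : Ed d | ‖z‖ < (1-α)/100 * ‖b‖} :=
      isOpen_lt continuous_norm continuous_const
    have h2 : IsClosed {z : Ed d | (1 - (1-α)/100) * ‖b‖ * ‖z‖ ≤ |⟪z, b⟫|} :=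
      isClosed_le (by continuity) ((continuous_id.inner continuous_const).abs)
    exact h1.measurableSet.inter h2.measurableSet
  have hpt := fun z (hz : z ∈ S) =>
    pointwise_vec α hα hα1 b z hb hz.1.le hz.2
  have hcpos : (0:ℝ) < 2 ^ (α-3) * α * (1-α) := by
    have : (0:ℝ) < (2:ℝ) ^ (α-3) := Real.rpow_pos_of_pos (by norm_num) _
    have h2 : (0:ℝ) < α * (1-α) := mul_pos hα (by linarith)
    nlinarith
  have hEneg : ∀ z ∈ S,
      ‖b + (2:ℝ) • z‖ ^ α + ‖b - (2:ℝ) • z‖ ^ α - 2 * ‖b‖ ^ α ≤ 0 := by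
    intro z hz
    have h := (hpt z hz).1
    have hnn : (0:ℝ) ≤ 2 ^ (α-3) * α * (1-α) * ‖b‖ ^ (α-2) * ‖z‖^2 := by
      have : (0:ℝ) ≤ ‖b‖ ^ (α-2) := Real.rpow_nonneg (norm_nonneg b) _
      positivity
    linarith
  constructor
  · exact fun z hz => (hpt z hz).1
  · intro K hK hK0
    set E : Ed d → ℝ := fun z =>
      ‖b + (2:ℝ) • z‖ ^ α + ‖b - (2:ℝ) • z‖ ^ α - 2 * ‖b‖ ^ α with hE
    set G : Ed d → ℝ := fun z => ‖b‖ ^ (α-2) * ‖z‖^2 * K z with hG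
    have hGnn : ∀ z, 0 ≤ G z := by
      intro z
      have : (0:ℝ) ≤ ‖b‖ ^ (α-2) := Real.rpow_nonneg (norm_nonneg b) _
      have := hK0 z
      positivity
    by_cases hGint : IntegrableOn G S volume
    · -- G integrable
      have hEcont : Continuous E := by
        apply Continuous.sub
        apply Continuous.add
        · exact (continuous_const.add (continuous_id.const_smul (2:ℝ))).norm.rpow_const
            (fun z => Or.inr hα.le)
        · exact (continuous_const.sub (continuous_id.const_smul (2:ℝ))).norm.rpow_const
            (fun z => Or.inr hα.le)
        · exact continuous_const
      have hFmeas : AEStronglyMeasurable (fun z => E z * K z) (volume.restrict S) :=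
        (hEcont.aestronglyMeasurable.mul hK.aestronglyMeasurable).restrict
      have hbound : ∀ᵐ z ∂(volume.restrict S), ‖E z * K z‖ ≤ 16 * G z := by
        refine (ae_restrict_iff' hSm).2 (Filter.Eventually.of_forall ?_)
        intro z hz
        have h1 := (hpt z hz).2
        have h2 := hEneg z hz
        have h3 := hK0 z
        rw [norm_mul, Real.norm_eq_abs, Real.norm_eq_abs, abs_of_nonneg h3,
          abs_of_nonpos h2]
        have : -E z ≤ 16 * (‖b‖ ^ (α-2) * ‖z‖^2) := by rw [hE]; dsimp only; linarith
        calc -E z * K z ≤ 16 * (‖b‖ ^ (α-2) * ‖z‖^2) * K z :=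
              mul_le_mul_of_nonneg_right this h3
          _ = 16 * G z := by rw [hG]; ring
      have hFint : Integrable (fun z => E z * K z) (volume.restrict S) := by
        refine Integrable.mono (hGint.const_mul 16) hFmeas ?_
        refine hbound.mono fun z hz => ?_
        calc ‖E z * K z‖ ≤ 16 * G z := hz
          _ ≤ ‖16 * G z‖ := le_abs_self _
      have hle : ∀ᵐ z ∂(volume.restrict S),
          E z * K z ≤ -(2 ^ (α-3) * α * (1-α)) * G z := by
        refine (ae_restrict_iff' hSm).2 (Filter.Eventually.of_forall ?_)
        intro z hz
        have h1 := (hpt z hz).1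
        have h3 := hK0 z
        calc E z * K z ≤ -(2 ^ (α-3) * α * (1-α) * ‖b‖ ^ (α-2) * ‖z‖^2) * K z :=
              mul_le_mul_of_nonneg_right h1 h3
          _ = -(2 ^ (α-3) * α * (1-α)) * G z := by rw [hG]; ring
      calc ∫ z in S, E z * K z
          ≤ ∫ z in S, -(2 ^ (α-3) * α * (1-α)) * G z :=
            integral_mono_ae hFint (hGint.const_mul _) hle
        _ = -(2 ^ (α-3) * α * (1-α)) * ∫ z in S, G z := integral_const_mul _ _
    · -- G not integrable
      rw [integral_undef hGint, mul_zero]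
      refine integral_nonpos_of_ae ?_
      refine (ae_restrict_iff' hSm).2 (Filter.Eventually.of_forall ?_)
      intro z hz
      exact mul_nonpos_of_nonpos_of_nonneg (hEneg z hz) (hK0 z)
end
end
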